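/- arXiv:2508.02514 — 3 statements merged into one kernel-verified Lean document; each statement's English description precedes it below -/
import Mathlib

section
/- Every Maiorana–McFarland function is bent: for even n and any function h : F_2^{n/2} → F_2, the function f : F_2^n → F_2 defined by f(x) := ⟨x_1, x_2⟩ + h(x_2) (where x_1, x_2 are the first and second halves of x, and arithmetic is mod 2) satisfies |\widehat{χ_f}(y)| = 2^{-n/2} for all y ∈ F_2^n, where χ_f := (-1)^f. -/
/-- `χ(b) = (-1)^b` for `b : 𝔽₂`. -/
noncomputable def chiSign (b : ZMod 2) : ℝ := (-1 : ℝ) ^ b.val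

/-- Inner product mod 2. -/
def ipF2 {ι : Type*} [Fintype ι] (u v : ι → ZMod 2) : ZMod 2 := ∑ i, u i * v i

lemma chiSign_add (a b : ZMod 2) : chiSign (a + b) = chiSign a * chiSign b := by
  rw [chiSign, chiSign, chiSign, ← pow_add, ZMod.val_add, ← neg_one_pow_eq_pow_mod_two]

lemma zmod2_add_eq_zero {a b : ZMod 2} (hab : a + b = 0) : a = b := by
  revert a b; decide

lemma chiSign_zero : chiSign 0 = 1 := by simp [chiSign]

lemma chiSign_sum {ι : Type*} (s : Finset ι) (f : ι → ZMod 2) :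
    chiSign (∑ i ∈ s, f i) = ∏ i ∈ s, chiSign (f i) := by
  classical
  induction s using Finset.induction with
  | empty => simp [chiSign_zero]
  | insert a s hx ih => simp [Finset.sum_insert hx, Finset.prod_insert hx, chiSign_add, ih]

lemma abs_chiSign (a : ZMod 2) : |chiSign a| = 1 := by
  fin_cases a <;> simp [chiSign]

lemma sum_chiSign_ip (m : ℕ) (v : Fin m → ZMod 2) :
    ∑ x : Fin m → ZMod 2, chiSign (ipF2 x v) = if v = 0 then (2 : ℝ) ^ m else 0 := by
  classical
  have : ∀ x : Fin m → ZMod 2, chiSign (ipF2 x v) = ∏ i, chiSign (x i * v i) := by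
    intro x; rw [ipF2, chiSign_sum]
  simp_rw [this]
  rw [← Fintype.prod_sum fun i b => chiSign (b * v i)]
  have hfac : ∀ i : Fin m, (∑ b : ZMod 2, chiSign (b * v i)) =
      if v i = 0 then (2 : ℝ) else 0 := by
    intro i
    have : (∑ b : ZMod 2, chiSign (b * v i)) = chiSign 0 + chiSign (v i) := by
      rw [show (Finset.univ : Finset (ZMod 2)) = {0,1} from by decide]; simp
    rw [this, chiSign_zero]
    by_cases hv : v i = 0
    · simp [hv, chiSign_zero]; norm_num
    · have hv1 : v i = 1 := by
        have := ZMod.val_lt (v i); interval_cases hvv : ZMod.val (v i)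
        · exact absurd ((ZMod.val_eq_zero _).mp hvv) hv
        · exact (ZMod.val_eq_one (by norm_num) (v i)).mp hvv
      simp [hv, hv1, chiSign, ZMod.val_one]
  by_cases hv : v = 0
  · subst hv; simp [hfac, chiSign_zero]
  · obtain ⟨i, hi⟩ : ∃ i, v i ≠ 0 := by
      by_contra hc; push_neg at hc; exact hv (funext hc)
    rw [if_neg hv]
    apply Finset.prod_eq_zero (Finset.mem_univ i)
    rw [hfac, if_neg hi]

theorem stmt3 (m : ℕ) (h : (Fin m → ZMod 2) → ZMod 2)
    (y : (Fin m → ZMod 2) × (Fin m → ZMod 2)) :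
    |(2 : ℝ) ^ (-(2 * m : ℤ)) *
        ∑ x : (Fin m → ZMod 2) × (Fin m → ZMod 2),
          chiSign (ipF2 x.1 x.2 + h x.2) * chiSign (ipF2 x.1 y.1 + ipF2 x.2 y.2)|
      = (2 : ℝ) ^ (-(m : ℤ)) := by
  classical
  have key : ∀ x1 x2 : Fin m → ZMod 2,
      chiSign (ipF2 x1 x2 + h x2) * chiSign (ipF2 x1 y.1 + ipF2 x2 y.2)
        = chiSign (ipF2 x1 (x2 + y.1)) * chiSign (h x2 + ipF2 x2 y.2) := by
    intro x1 x2
    have hb : ipF2 x1 (x2 + y.1) = ipF2 x1 x2 + ipF2 x1 y.1 := by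
      simp [ipF2, mul_add, Finset.sum_add_distrib]
    rw [hb, chiSign_add, chiSign_add, chiSign_add, chiSign_add]
    ring
  have hsum : (∑ x : (Fin m → ZMod 2) × (Fin m → ZMod 2),
      chiSign (ipF2 x.1 x.2 + h x.2) * chiSign (ipF2 x.1 y.1 + ipF2 x.2 y.2))
      = (2 : ℝ) ^ m * chiSign (h y.1 + ipF2 y.1 y.2) := by
    rw [Fintype.sum_prod_type]
    simp_rw [key]
    rw [Finset.sum_comm]
    have : ∀ x2 : Fin m → ZMod 2,
        (∑ x1 : Fin m → ZMod 2, chiSign (ipF2 x1 (x2 + y.1)) * chiSign (h x2 + ipF2 x2 y.2))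
        = (if x2 = y.1 then (2:ℝ)^m else 0) * chiSign (h x2 + ipF2 x2 y.2) := by
      intro x2
      rw [← Finset.sum_mul, sum_chiSign_ip]
      congr 1
      have hiff : x2 + y.1 = 0 ↔ x2 = y.1 := by
        constructor
        · intro he; exact funext fun i => zmod2_add_eq_zero (congrFun he i)
        · intro he; subst he; funext i; exact CharTwo.add_self_eq_zero _
      simp [hiff]
    simp_rw [this]
    rw [Finset.sum_eq_single y.1 (fun b _ hb => by simp [hb]) (by simp)]
    simp
  rw [hsum, abs_mul, abs_mul, abs_chiSign, mul_one]
  rw [abs_of_pos (by positivity), abs_of_pos (by positivity)]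
  rw [← zpow_natCast (2:ℝ) m, ← zpow_add₀ (by norm_num : (2:ℝ) ≠ 0)]
  congr 1
  ring
end

section
/- If A is uniform over invertible n×n matrices over F_2, the distribution of the bottom half A_2 of A (an (n/2)×n matrix) is within total variation distance (n/2)·2^{-n/2} of the uniform distribution over all (n/2)×n matrices over F_2. -/
open Matrix Submodule

variable {m : ℕ}

abbrev V (m : ℕ) := Fin m ⊕ Fin m → ZMod 2
abbrev Mat (m : ℕ) := Matrix (Fin m ⊕ Fin m) (Fin m ⊕ Fin m) (ZMod 2)
abbrev MH (m : ℕ) := Matrix (Fin m) (Fin m ⊕ Fin m) (ZMod 2)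

theorem extend_to_unit (M : MH m) (h : LinearIndependent (ZMod 2) (fun i => M i)) :
    ∃ A : Mat m, IsUnit A ∧ A.submatrix Sum.inr id = M := by
  classical
  set W : Submodule (ZMod 2) (V m) := span (ZMod 2) (Set.range fun i => M i) with hW
  obtain ⟨W', hc⟩ := Submodule.exists_isCompl W
  have hrV : Module.finrank (ZMod 2) (V m) = m + m := by
    simp [Module.finrank_pi]
  have hrW : Module.finrank (ZMod 2) W = m := by
    rw [finrank_span_eq_card h]; simp
  have hrW' : Module.finrank (ZMod 2) W' = m := by
    have := Submodule.finrank_add_eq_of_isCompl hc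
    omega
  let b : Module.Basis (Fin m) (ZMod 2) W' := Module.finBasisOfFinrankEq (ZMod 2) W' hrW'
  let A : Mat m := Matrix.of (Sum.elim (fun i => (b i : V m)) (fun i => M i))
  refine ⟨A, ?_, ?_⟩
  · rw [← Matrix.linearIndependent_rows_iff_isUnit]
    have hb : LinearIndependent (ZMod 2) (fun i => (b i : V m)) :=
      b.linearIndependent.map' W'.subtype (Submodule.ker_subtype W')
    have hspanb : span (ZMod 2) (Set.range fun i => (b i : V m)) ≤ W' := by
      rw [Submodule.span_le]
      rintro _ ⟨i, rfl⟩; exact (b i).2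
    exact hb.sum_type h (Disjoint.mono hspanb le_rfl hc.disjoint.symm)
  · ext i j; rfl

abbrev fib (M : MH m) := {A : Mat m // IsUnit A ∧ A.submatrix Sum.inr id = M}

theorem fib_zero (M : MH m) (h : ¬ LinearIndependent (ZMod 2) (fun i => M i)) :
    Nat.card (fib M) = 0 := by
  rw [Nat.card_eq_zero]
  left
  constructor
  rintro ⟨A, hA, rfl⟩
  exact h ((Matrix.linearIndependent_rows_iff_isUnit.2 hA).comp Sum.inr Sum.inr_injective)

theorem bot_mul (A G : Mat m) :
    (A * G).submatrix Sum.inr id = A.submatrix Sum.inr id * G := by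
  rw [Matrix.submatrix_mul A G Sum.inr id id Function.bijective_id]
  rfl

theorem fib_const (M M' : MH m) (h : LinearIndependent (ZMod 2) (fun i => M i))
    (h' : LinearIndependent (ZMod 2) (fun i => M' i)) :
    Nat.card (fib M) = Nat.card (fib M') := by
  obtain ⟨B, hB, hB2⟩ := extend_to_unit M h
  obtain ⟨B', hB', hB'2⟩ := extend_to_unit M' h'
  obtain ⟨u, rfl⟩ := hB
  obtain ⟨u', rfl⟩ := hB'
  set G : (Mat m)ˣ := u⁻¹ * u' with hG
  have key : M * (G : Mat m) = M' := by
    rw [← hB2, ← bot_mul, hG]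
    have : (u : Mat m) * ↑(u⁻¹ * u') = ↑u' := by
      rw [Units.val_mul, ← mul_assoc, Units.mul_inv, one_mul]
    rw [this, hB'2]
  refine Nat.card_congr ⟨fun A => ⟨A.1 * G, A.2.1.mul G.isUnit, by rw [bot_mul, A.2.2, key]⟩,
    fun A => ⟨A.1 * ↑G⁻¹, A.2.1.mul G⁻¹.isUnit, by
      rw [bot_mul, A.2.2, ← key, Matrix.mul_assoc, ← Units.val_mul, mul_inv_cancel, Units.val_one,
        Matrix.mul_one]⟩, ?_, ?_⟩
  · rintro ⟨A, hA⟩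
    apply Subtype.ext
    show A * ↑G * ↑G⁻¹ = A
    rw [Matrix.mul_assoc, ← Units.val_mul, mul_inv_cancel, Units.val_one, Matrix.mul_one]
  · rintro ⟨A, hA⟩
    apply Subtype.ext
    show A * ↑G⁻¹ * ↑G = A
    rw [Matrix.mul_assoc, ← Units.val_mul, inv_mul_cancel, Units.val_one, Matrix.mul_one]

theorem sum_fib (m : ℕ) :
    ∑ M : MH m, (Nat.card (fib M)) = Nat.card {A : Mat m // IsUnit A} := by
  classical
  rw [Nat.card_eq_fintype_card, Fintype.card_subtype]
  rw [Finset.card_eq_sum_card_fiberwise (f := fun A : Mat m => A.submatrix Sum.inr id)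
    (t := Finset.univ) (fun x _ => Finset.mem_univ _)]
  refine (Finset.sum_congr rfl (fun M _ => ?_)).symm
  rw [Nat.card_eq_fintype_card, Fintype.card_subtype, Finset.filter_filter]

theorem ker_count {m : ℕ} (v : Fin m → ZMod 2) (hv : v ≠ 0) :
    Nat.card {M : MH m // v ᵥ* M = 0} * Fintype.card (V m) = Fintype.card (MH m) := by
  classical
  have hadd : ∀ A B : MH m, v ᵥ* (A + B) = v ᵥ* A + v ᵥ* B := fun A B =>
    Matrix.vecMul_add A B v
  let Φ : MH m →+ V m := AddMonoidHom.mk' (fun M => v ᵥ* M) hadd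
  have hsurj : Function.Surjective Φ := by
    intro w
    obtain ⟨i0, hi0⟩ := Function.ne_iff.1 hv
    have h1 : v i0 = 1 := by
      have : ∀ x : ZMod 2, x ≠ 0 → x = 1 := by decide
      exact this _ hi0
    refine ⟨Matrix.of (fun i j => if i = i0 then w j else 0), ?_⟩
    funext j
    show (v ᵥ* _) j = w j
    simp only [Matrix.vecMul, dotProduct, Matrix.of_apply]
    rw [Finset.sum_eq_single i0]
    · simp [h1]
    · intro b _ hb; simp [hb]
    · simp
  have hq := Nat.card_congr (QuotientAddGroup.quotientKerEquivOfSurjective Φ hsurj).toEquiv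
  have hcard := AddSubgroup.card_eq_card_quotient_mul_card_addSubgroup Φ.ker
  have hker : Nat.card {M : MH m // v ᵥ* M = 0} = Nat.card Φ.ker :=
    Nat.card_congr (Equiv.subtypeEquivRight (fun x => Iff.symm AddMonoidHom.mem_ker))
  rw [hker]
  simp only [← Nat.card_eq_fintype_card]
  rw [hcard, hq, mul_comm]

open Finset in
theorem bad_bound (m : ℕ) [DecidablePred (fun M : MH m => LinearIndependent (ZMod 2) (fun i => M i))] :
    (Finset.univ.filter (fun M : MH m => ¬ LinearIndependent (ZMod 2) (fun i => M i))).card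
      * 2 ^ m ≤ m * Fintype.card (MH m) := by
  classical
  set N := Fintype.card (MH m)
  have hK : Fintype.card (V m) = 2 ^ m * 2 ^ m := by
    simp [← pow_add]
  set nz : Finset (Fin m → ZMod 2) := Finset.univ.filter (fun v => v ≠ 0) with hnz
  set bad : Finset (MH m) :=
    Finset.univ.filter (fun M : MH m => ¬ LinearIndependent (ZMod 2) (fun i => M i)) with hbad
  have hsub : bad ⊆ nz.biUnion (fun v => Finset.univ.filter (fun M : MH m => v ᵥ* M = 0)) := by
    intro M hM
    rw [hbad, Finset.mem_filter] at hM
    obtain ⟨g, hg, i, hgi⟩ := Fintype.not_linearIndependent_iff.1 hM.2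
    refine Finset.mem_biUnion.2 ⟨g, ?_, ?_⟩
    · rw [hnz, Finset.mem_filter]
      exact ⟨Finset.mem_univ _, fun h0 => hgi (by rw [h0]; rfl)⟩
    · rw [Finset.mem_filter]
      refine ⟨Finset.mem_univ _, ?_⟩
      funext j
      have := congrFun hg j
      rw [Finset.sum_apply] at this
      simpa [Matrix.vecMul, dotProduct] using this
  have hfib : ∀ v ∈ nz, (Finset.univ.filter (fun M : MH m => v ᵥ* M = 0)).card
      * Fintype.card (V m) = N := by
    intro v hv
    rw [hnz, Finset.mem_filter] at hv
    rw [← Fintype.card_subtype, ← Nat.card_eq_fintype_card]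
    exact ker_count v hv.2
  have hnzcard : nz.card ≤ 2 ^ m - 1 := by
    have h1 : nz ⊆ Finset.univ.erase 0 := by
      intro v hv
      rw [hnz, Finset.mem_filter] at hv
      exact Finset.mem_erase.2 ⟨hv.2, Finset.mem_univ _⟩
    calc nz.card ≤ (Finset.univ.erase (0 : Fin m → ZMod 2)).card := Finset.card_le_card h1
      _ = Fintype.card (Fin m → ZMod 2) - 1 := by
          rw [Finset.card_erase_of_mem (Finset.mem_univ _), Finset.card_univ]
      _ = 2 ^ m - 1 := by simp
  have hpow : 2 ^ m - 1 ≤ m * 2 ^ m := by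
    cases m with
    | zero => simp
    | succ k =>
      have h2 : 2 ^ (k + 1) ≤ (k + 1) * 2 ^ (k + 1) :=
        Nat.le_mul_of_pos_left _ (Nat.succ_pos k)
      omega
  have hmain : bad.card * (2 ^ m * 2 ^ m) ≤ (m * 2 ^ m) * N := by
    calc bad.card * (2 ^ m * 2 ^ m)
        = bad.card * Fintype.card (V m) := by rw [hK]
      _ ≤ (nz.biUnion (fun v => Finset.univ.filter (fun M : MH m => v ᵥ* M = 0))).card
            * Fintype.card (V m) :=
          Nat.mul_le_mul_right _ (Finset.card_le_card hsub)
      _ ≤ (∑ v ∈ nz, (Finset.univ.filter (fun M : MH m => v ᵥ* M = 0)).card)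
            * Fintype.card (V m) :=
          Nat.mul_le_mul_right _ (Finset.card_biUnion_le)
      _ = ∑ v ∈ nz, (Finset.univ.filter (fun M : MH m => v ᵥ* M = 0)).card
            * Fintype.card (V m) := Finset.sum_mul _ _ _
      _ = ∑ _v ∈ nz, N := Finset.sum_congr rfl hfib
      _ = nz.card * N := by rw [Finset.sum_const, smul_eq_mul]
      _ ≤ (2 ^ m - 1) * N := Nat.mul_le_mul_right _ hnzcard
      _ ≤ (m * 2 ^ m) * N := Nat.mul_le_mul_right _ hpow
  have hpos : 0 < 2 ^ m := Nat.pow_pos (by norm_num)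
  apply Nat.le_of_mul_le_mul_right _ hpos
  calc bad.card * 2 ^ m * 2 ^ m = bad.card * (2 ^ m * 2 ^ m) := by ring
    _ ≤ (m * 2 ^ m) * N := hmain
    _ = m * N * 2 ^ m := by ring

set_option maxHeartbeats 1000000 in
theorem main' (m : ℕ) :
    (1 / 2 : ℝ) *
        ∑ M : MH m,
          |(Nat.card (fib M) : ℝ) / (Nat.card {A : Mat m // IsUnit A} : ℝ)
            - 1 / (Fintype.card (MH m) : ℝ)|
      ≤ (m : ℝ) * (2 : ℝ) ^ (-(m : ℤ)) := by
  classical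
  have hM₀ : LinearIndependent (ZMod 2) (fun i => ((1 : Mat m).submatrix Sum.inr id) i) :=
    (Matrix.linearIndependent_rows_iff_isUnit.2 isUnit_one).comp Sum.inr Sum.inr_injective
  set M₀ : MH m := (1 : Mat m).submatrix Sum.inr id with hM₀def
  set p : MH m → Prop := fun M => LinearIndependent (ZMod 2) (fun i => M i) with hp
  set c := Nat.card (fib M₀) with hcdef
  have hne : Nonempty (fib M₀) := ⟨⟨1, isUnit_one, rfl⟩⟩
  have hc1 : 1 ≤ c := Nat.card_pos
  set R : Finset (MH m) := Finset.univ.filter p with hR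
  set B : Finset (MH m) := Finset.univ.filter (fun M => ¬ p M) with hB
  set N := Fintype.card (MH m) with hN
  have hrb : R.card + B.card = N := by
    rw [hR, hB, Finset.card_filter_add_card_filter_not, Finset.card_univ]
  have hr1 : 1 ≤ R.card := Finset.card_pos.2 ⟨M₀, by rw [hR]; exact Finset.mem_filter.2 ⟨Finset.mem_univ _, hM₀⟩⟩
  have hrN : R.card ≤ N := by omega
  have hfR : ∀ M ∈ R, Nat.card (fib M) = c := by
    intro M hM
    rw [hR, Finset.mem_filter] at hM
    exact fib_const M M₀ hM.2 hM₀
  have hfB : ∀ M ∈ B, Nat.card (fib M) = 0 := by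
    intro M hM
    rw [hB, Finset.mem_filter] at hM
    exact fib_zero M hM.2
  have hT : Nat.card {A : Mat m // IsUnit A} = R.card * c := by
    rw [← sum_fib, ← Finset.sum_filter_add_sum_filter_not Finset.univ p]
    rw [Finset.sum_congr rfl hfR, Finset.sum_congr rfl hfB]
    simp [mul_comm]
  -- real number facts
  have hNpos : (0 : ℝ) < N := by
    have : 0 < N := by omega
    exact_mod_cast this
  have hrpos : (0 : ℝ) < R.card := by exact_mod_cast hr1
  have hcpos : (0 : ℝ) < c := by exact_mod_cast hc1
  have hsum : ∑ M : MH m,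
      |(Nat.card (fib M) : ℝ) / (Nat.card {A : Mat m // IsUnit A} : ℝ)
        - 1 / (N : ℝ)| = 2 * B.card / N := by
    rw [← Finset.sum_filter_add_sum_filter_not Finset.univ p]
    have e1 : ∀ M ∈ R, |(Nat.card (fib M) : ℝ) / (Nat.card {A : Mat m // IsUnit A} : ℝ)
        - 1 / (N : ℝ)| = 1 / R.card - 1 / N := by
      intro M hM
      rw [hfR M hM, hT]
      have : (c : ℝ) / (↑(R.card * c)) = 1 / R.card := by
        push_cast
        rw [mul_comm, div_mul_cancel_left₀ (ne_of_gt hcpos), one_div]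
      rw [this, abs_of_nonneg]
      have : (1 : ℝ) / N ≤ 1 / R.card :=
        one_div_le_one_div_of_le hrpos (by exact_mod_cast hrN)
      linarith
    have e2 : ∀ M ∈ B, |(Nat.card (fib M) : ℝ) / (Nat.card {A : Mat m // IsUnit A} : ℝ)
        - 1 / (N : ℝ)| = 1 / N := by
      intro M hM
      rw [hfB M hM, Nat.cast_zero, zero_div, zero_sub, abs_neg,
        abs_of_nonneg (by positivity)]
    rw [Finset.sum_congr rfl e1, Finset.sum_congr rfl e2, Finset.sum_const, Finset.sum_const]
    have hb : (B.card : ℝ) = N - R.card := by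
      have := hrb; push_cast [← this]; ring
    rw [nsmul_eq_mul, nsmul_eq_mul, hb]
    field_simp
    ring
  rw [hsum]
  have hbound := bad_bound m
  have hbound' : (B.card : ℝ) * 2 ^ m ≤ m * N := by exact_mod_cast hbound
  have h2pos : (0 : ℝ) < 2 ^ m := by positivity
  have : (2 : ℝ) ^ (-(m : ℤ)) = 1 / 2 ^ m := by
    rw [_root_.zpow_neg, zpow_natCast, one_div]
  rw [this]
  calc (1 / 2 : ℝ) * (2 * B.card / N) = B.card / N := by ring
    _ ≤ m * (1 / 2 ^ m) := by
        rw [div_le_iff₀ hNpos]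
        calc (B.card : ℝ) ≤ m * N / 2 ^ m := by
              rw [le_div_iff₀ h2pos]; linarith
          _ = m * (1 / 2 ^ m) * N := by ring

theorem stmt11 (m : ℕ) :
    (1 / 2 : ℝ) *
        ∑ M : Matrix (Fin m) (Fin m ⊕ Fin m) (ZMod 2),
          |(Nat.card {A : Matrix (Fin m ⊕ Fin m) (Fin m ⊕ Fin m) (ZMod 2) //
                IsUnit A ∧ A.submatrix Sum.inr id = M} : ℝ) /
              (Nat.card {A : Matrix (Fin m ⊕ Fin m) (Fin m ⊕ Fin m) (ZMod 2) // IsUnit A} : ℝ)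
            - 1 / (Fintype.card (Matrix (Fin m) (Fin m ⊕ Fin m) (ZMod 2)) : ℝ)|
      ≤ (m : ℝ) * (2 : ℝ) ^ (-(m : ℤ)) := main' m
end

section
/- Collision probability within one half: if A is uniform over invertible n×n matrices over F_2 and x ≠ x' ∈ F_2^n, then Pr[A_2 x = A_2 x'] ≤ (n/2 + 1)·2^{-n/2}, where A_2 is the bottom n/2 rows of A. -/
open Matrix

section Aux

variable {K : Type*} [Field K] {n : Type*} [Fintype n] [DecidableEq n]

/-- GL acts transitively on nonzero vectors: linear equiv version. -/
lemma exists_linearEquiv_apply_eq {V : Type*} [AddCommGroup V] [Module K V]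
    (v w : V) (hv : v ≠ 0) (hw : w ≠ 0) : ∃ e : V ≃ₗ[K] V, e v = w := by
  classical
  have hvi : LinearIndepOn K id ({v} : Set V) :=
    LinearIndepOn.singleton hv
  have hwi : LinearIndepOn K id ({w} : Set V) :=
    LinearIndepOn.singleton hw
  let Bv := Module.Basis.extend hvi
  let Bw := Module.Basis.extend hwi
  have hvmem : v ∈ hvi.extend (Set.subset_univ _) :=
    hvi.subset_extend (Set.subset_univ _) rfl
  have hwmem : w ∈ hwi.extend (Set.subset_univ _) :=
    hwi.subset_extend (Set.subset_univ _) rfl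
  obtain e0 := Bv.indexEquiv Bw
  let e1 : _ ≃ _ := e0.trans (Equiv.swap (e0 ⟨v, hvmem⟩) ⟨w, hwmem⟩)
  refine ⟨Bv.equiv Bw e1, ?_⟩
  have h1 : Bv ⟨v, hvmem⟩ = v := Module.Basis.extend_apply_self hvi _
  have h2 : e1 ⟨v, hvmem⟩ = ⟨w, hwmem⟩ := by
    simp [e1, Equiv.swap_apply_left]
  calc (Bv.equiv Bw e1) v = (Bv.equiv Bw e1) (Bv ⟨v, hvmem⟩) := by rw [h1]
    _ = Bw (e1 ⟨v, hvmem⟩) := Bv.equiv_apply _ Bw e1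
    _ = w := by rw [h2]; exact Module.Basis.extend_apply_self hwi _


/-- GL acts transitively on nonzero vectors: unit matrix version. -/
lemma exists_unit_mulVec_eq (v w : n → K) (hv : v ≠ 0) (hw : w ≠ 0) :
    ∃ M : (Matrix n n K)ˣ, (M : Matrix n n K) *ᵥ v = w := by
  obtain ⟨e, he⟩ := exists_linearEquiv_apply_eq (K := K) v w hv hw
  refine ⟨⟨LinearMap.toMatrix' (e : (n → K) →ₗ[K] (n → K)),
      LinearMap.toMatrix' (e.symm : (n → K) →ₗ[K] (n → K)), ?_, ?_⟩, ?_⟩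
  · rw [← LinearMap.toMatrix'_comp, ← LinearMap.toMatrix'_id]
    congr 1
    ext x
    simp
  · rw [← LinearMap.toMatrix'_comp, ← LinearMap.toMatrix'_id]
    congr 1
    ext x
    simp
  · show LinearMap.toMatrix' (e : (n → K) →ₗ[K] (n → K)) *ᵥ v = w
    rw [← Matrix.toLin'_apply, Matrix.toLin'_toMatrix']
    exact he

end Aux

section Count

variable {K : Type*} [Field K] [Fintype K] [DecidableEq K]
variable {n : Type*} [Fintype n] [DecidableEq n]

/-- All fibers over nonzero vectors have the same cardinality. -/
lemma fiber_card_eq (v w : n → K) (hv : v ≠ 0) (hw : w ≠ 0) :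
    Fintype.card {u : (Matrix n n K)ˣ // (u : Matrix n n K) *ᵥ v = w}
      = Fintype.card {u : (Matrix n n K)ˣ // (u : Matrix n n K) *ᵥ v = v} := by
  classical
  obtain ⟨M, hM⟩ := exists_unit_mulVec_eq v w hv hw
  refine (Fintype.card_congr
    (⟨fun u => ⟨M * u.1, ?_⟩, fun u => ⟨M⁻¹ * u.1, ?_⟩, ?_, ?_⟩ :
      {u : (Matrix n n K)ˣ // (u : Matrix n n K) *ᵥ v = v}
        ≃ {u : (Matrix n n K)ˣ // (u : Matrix n n K) *ᵥ v = w})).symm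
  · rw [Units.val_mul, ← Matrix.mulVec_mulVec, u.2, hM]
  · rw [Units.val_mul, ← Matrix.mulVec_mulVec, u.2, ← hM, Matrix.mulVec_mulVec,
      ← Units.val_mul, inv_mul_cancel, Units.val_one, Matrix.one_mulVec]
  · intro u; ext : 1; simp [mul_assoc]
  · intro u; ext : 1; simp [mul_assoc]

/-- The fiber over `0` is empty. -/
lemma fiber_card_zero (v : n → K) (hv : v ≠ 0) :
    Fintype.card {u : (Matrix n n K)ˣ // (u : Matrix n n K) *ᵥ v = 0} = 0 := by
  classical
  rw [Fintype.card_eq_zero_iff]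
  refine ⟨fun u => hv ?_⟩
  have h1 : v = ((u.1⁻¹ : (Matrix n n K)ˣ) : Matrix n n K) *ᵥ ((u.1 : Matrix n n K) *ᵥ v) := by
    rw [Matrix.mulVec_mulVec, ← Units.val_mul, inv_mul_cancel, Units.val_one,
      Matrix.one_mulVec]
  rw [u.2, Matrix.mulVec_zero] at h1
  exact h1

lemma fiber_card (v : n → K) (hv : v ≠ 0) (w : n → K) :
    Fintype.card {u : (Matrix n n K)ˣ // (u : Matrix n n K) *ᵥ v = w}
      = if w = 0 then 0
        else Fintype.card {u : (Matrix n n K)ˣ // (u : Matrix n n K) *ᵥ v = v} := by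
  split
  · next h => rw [h]; exact fiber_card_zero v hv
  · next h => exact fiber_card_eq v w hv h

/-- Total count of units, partitioned by the image of `v`. -/
lemma total_count (v : n → K) (hv : v ≠ 0) :
    Fintype.card (Matrix n n K)ˣ
        + Fintype.card {u : (Matrix n n K)ˣ // (u : Matrix n n K) *ᵥ v = v}
      = Fintype.card (n → K)
        * Fintype.card {u : (Matrix n n K)ˣ // (u : Matrix n n K) *ᵥ v = v} := by
  classical
  set c := Fintype.card {u : (Matrix n n K)ˣ // (u : Matrix n n K) *ᵥ v = v} with hc
  have h1 : Fintype.card (Matrix n n K)ˣ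
      = ∑ w : n → K, Fintype.card {u : (Matrix n n K)ˣ // (u : Matrix n n K) *ᵥ v = w} := by
    rw [← Fintype.card_sigma]
    exact (Fintype.card_congr
      (Equiv.sigmaFiberEquiv (fun u : (Matrix n n K)ˣ => (u : Matrix n n K) *ᵥ v))).symm
  rw [h1]
  calc (∑ w : n → K, Fintype.card {u : (Matrix n n K)ˣ // (u : Matrix n n K) *ᵥ v = w}) + c
      = (∑ w : n → K, if w = 0 then 0 else c) + ∑ w : n → K, if w = 0 then c else 0 := by
        rw [Finset.sum_ite_eq' Finset.univ (0 : n → K) (fun _ => c)]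
        simp only [Finset.mem_univ, if_true]
        congr 1
        exact Finset.sum_congr rfl fun w _ => fiber_card v hv w
    _ = ∑ w : n → K, ((if w = 0 then 0 else c) + (if w = 0 then c else 0)) :=
        Finset.sum_add_distrib.symm
    _ = ∑ _w : n → K, c := Finset.sum_congr rfl fun w _ => by split <;> simp
    _ = Fintype.card (n → K) * c := by rw [Finset.sum_const, Finset.card_univ, smul_eq_mul]

/-- Count of units landing in a set `Q`, bounded fiberwise. -/
lemma good_count (v : n → K) (hv : v ≠ 0) (Q : (n → K) → Prop) [DecidablePred Q] :
    Fintype.card {u : (Matrix n n K)ˣ // Q ((u : Matrix n n K) *ᵥ v)}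
      ≤ Fintype.card {w : n → K // Q w}
        * Fintype.card {u : (Matrix n n K)ˣ // (u : Matrix n n K) *ᵥ v = v} := by
  classical
  set c := Fintype.card {u : (Matrix n n K)ˣ // (u : Matrix n n K) *ᵥ v = v} with hc
  have hsum := Finset.card_eq_sum_card_fiberwise
    (s := Finset.univ.filter (fun u : (Matrix n n K)ˣ => Q ((u : Matrix n n K) *ᵥ v)))
    (f := fun u : (Matrix n n K)ˣ => (u : Matrix n n K) *ᵥ v)
    (t := Finset.univ.filter Q)
    (fun u hu => by
      simp only [Finset.mem_coe, Finset.mem_filter, Finset.mem_univ, true_and] at hu ⊢; exact hu)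
  rw [Fintype.card_subtype, hsum]
  refine le_trans (Finset.sum_le_sum (g := fun _ => c) (fun w _ => ?_)) (le_of_eq ?_)
  · refine le_trans (Finset.card_le_card
      (Finset.filter_subset_filter _ (Finset.filter_subset _ _))) ?_
    beta_reduce
    rw [← Fintype.card_subtype, fiber_card v hv w]
    split <;> simp [hc]
  · rw [Finset.sum_const, smul_eq_mul, ← Fintype.card_subtype]

end Count


lemma final_arith (m a b c : ℕ) (hm : 1 ≤ m) (hb : b + c = 2 ^ (m + m) * c)
    (ha : a ≤ 2 ^ m * c) (hc : 1 ≤ c) (hbpos : 0 < b) :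
    (a : ℝ) / (b : ℝ) ≤ ((m : ℝ) + 1) * (2 : ℝ) ^ (-(m : ℤ)) := by
  set t : ℝ := (2 : ℝ) ^ m with ht_def
  have ht2 : (2 : ℝ) ≤ t := by
    calc (2 : ℝ) = 2 ^ 1 := (pow_one 2).symm
    _ ≤ 2 ^ m := pow_le_pow_right₀ one_le_two hm
  have ht0 : (0 : ℝ) < t := by positivity
  have hcR : (1 : ℝ) ≤ (c : ℝ) := by exact_mod_cast hc
  have hbR : (b : ℝ) = (t ^ 2 - 1) * c := by
    have h : (b : ℝ) + c = t ^ 2 * c := by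
      have h2 : (t : ℝ) ^ 2 = 2 ^ (m + m) := by
        rw [ht_def, ← pow_mul, mul_two]
      rw [h2]
      exact_mod_cast congrArg (Nat.cast : ℕ → ℝ) hb
    linarith
  have haR : (a : ℝ) ≤ t * c := by
    rw [ht_def]
    exact_mod_cast ha
  have hbpos' : (0 : ℝ) < (b : ℝ) := by exact_mod_cast hbpos
  have hm1 : (1 : ℝ) ≤ (m : ℝ) := by exact_mod_cast hm
  have key : t ^ 2 ≤ ((m : ℝ) + 1) * (t ^ 2 - 1) := by nlinarith
  rw [div_le_iff₀ hbpos', hbR, _root_.zpow_neg, zpow_natCast, ← ht_def]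
  calc (a : ℝ) ≤ t * c := haR
    _ = t⁻¹ * (t ^ 2 * c) := by field_simp
    _ ≤ t⁻¹ * ((((m : ℝ) + 1) * (t ^ 2 - 1)) * c) := by
        have h3 : t ^ 2 * (c : ℝ) ≤ (((m : ℝ) + 1) * (t ^ 2 - 1)) * c :=
          mul_le_mul_of_nonneg_right key (by positivity)
        exact mul_le_mul_of_nonneg_left h3 (by positivity)
    _ = ((m : ℝ) + 1) * t⁻¹ * ((t ^ 2 - 1) * c) := by ring

set_option maxHeartbeats 1000000 in
theorem stmt13 (m : ℕ) (x x' : Fin m ⊕ Fin m → ZMod 2) (hxx : x ≠ x') :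
    (Nat.card {A : Matrix (Fin m ⊕ Fin m) (Fin m ⊕ Fin m) (ZMod 2) //
        IsUnit A ∧ (A.submatrix Sum.inr id).mulVec x = (A.submatrix Sum.inr id).mulVec x'} : ℝ) /
      (Nat.card {A : Matrix (Fin m ⊕ Fin m) (Fin m ⊕ Fin m) (ZMod 2) // IsUnit A} : ℝ)
    ≤ ((m : ℝ) + 1) * (2 : ℝ) ^ (-(m : ℤ)) := by
  classical
  rcases Nat.eq_zero_or_pos m with hm0 | hm
  · subst hm0
    exact absurd (funext fun i => i.elim (fun j => j.elim0) (fun j => j.elim0)) hxx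
  have hv : x - x' ≠ 0 := sub_ne_zero.mpr hxx
  set v : Fin m ⊕ Fin m → ZMod 2 := x - x' with hv_def
  set c := Fintype.card {u : (Matrix (Fin m ⊕ Fin m) (Fin m ⊕ Fin m) (ZMod 2))ˣ //
    (u : Matrix (Fin m ⊕ Fin m) (Fin m ⊕ Fin m) (ZMod 2)) *ᵥ v = v} with hc_def
  set Q : ((Fin m ⊕ Fin m) → ZMod 2) → Prop := fun w => ∀ i, w (Sum.inr i) = 0 with hQ_def
  -- cardinality facts
  have hcard_fun : Fintype.card (Fin m ⊕ Fin m → ZMod 2) = 2 ^ (m + m) := by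
    simp [Fintype.card_fun]
  have hQcard : Fintype.card {w : Fin m ⊕ Fin m → ZMod 2 // Q w} = 2 ^ m := by
    have e : {w : Fin m ⊕ Fin m → ZMod 2 // Q w} ≃ (Fin m → ZMod 2) :=
      { toFun := fun w => fun i => w.1 (Sum.inl i)
        invFun := fun y => ⟨Sum.elim y 0, fun _ => rfl⟩
        left_inv := fun w => Subtype.ext (funext fun i => by
          cases i with
          | inl j => rfl
          | inr j => exact (w.2 j).symm)
        right_inv := fun y => rfl }
    rw [Fintype.card_congr e]
    simp [Fintype.card_fun]
  have hB1 := total_count v hv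
  have hB2 := good_count v hv Q
  rw [hcard_fun] at hB1
  rw [hQcard] at hB2
  have hc1 : 1 ≤ c := by
    rw [hc_def]
    have : Nonempty {u : (Matrix (Fin m ⊕ Fin m) (Fin m ⊕ Fin m) (ZMod 2))ˣ //
        (u : Matrix (Fin m ⊕ Fin m) (Fin m ⊕ Fin m) (ZMod 2)) *ᵥ v = v} :=
      ⟨⟨1, by simp [Matrix.one_mulVec]⟩⟩
    exact Fintype.card_pos
  -- rewrite the statement's cardinalities
  have hcond : ∀ A : Matrix (Fin m ⊕ Fin m) (Fin m ⊕ Fin m) (ZMod 2),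
      ((A.submatrix Sum.inr id).mulVec x = (A.submatrix Sum.inr id).mulVec x') ↔ Q (A *ᵥ v) := by
    intro A
    have hsub : ∀ y : Fin m ⊕ Fin m → ZMod 2,
        (A.submatrix Sum.inr id).mulVec y = fun i => (A *ᵥ y) (Sum.inr i) := by
      intro y; funext i; simp [Matrix.mulVec, dotProduct, Matrix.submatrix_apply]
    rw [hsub, hsub]
    constructor
    · intro h i
      have h1 := congrFun h i
      simp [hv_def, Matrix.mulVec_sub, Pi.sub_apply, h1]
    · intro h
      funext i
      have h1 := h i
      simp only [hQ_def, hv_def, Matrix.mulVec_sub, Pi.sub_apply, sub_eq_zero] at h1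
      exact h1
  have ha : Nat.card {A : Matrix (Fin m ⊕ Fin m) (Fin m ⊕ Fin m) (ZMod 2) //
      IsUnit A ∧ (A.submatrix Sum.inr id).mulVec x = (A.submatrix Sum.inr id).mulVec x'}
      = Fintype.card {u : (Matrix (Fin m ⊕ Fin m) (Fin m ⊕ Fin m) (ZMod 2))ˣ //
          Q ((u : Matrix (Fin m ⊕ Fin m) (Fin m ⊕ Fin m) (ZMod 2)) *ᵥ v)} := by
    rw [← Nat.card_eq_fintype_card]
    refine Nat.card_congr ⟨fun A => ⟨A.2.1.unit, ?_⟩, fun u => ⟨u.1.1, u.1.isUnit, ?_⟩, ?_, ?_⟩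
    · have hval : (A.2.1.unit : Matrix (Fin m ⊕ Fin m) (Fin m ⊕ Fin m) (ZMod 2)) = A.1 :=
        A.2.1.unit_spec
      rw [hval]
      exact (hcond A.1).mp A.2.2
    · exact (hcond _).mpr u.2
    · intro A; exact Subtype.ext A.2.1.unit_spec
    · intro u; exact Subtype.ext (Units.ext (by simp))
  have hb : Nat.card {A : Matrix (Fin m ⊕ Fin m) (Fin m ⊕ Fin m) (ZMod 2) // IsUnit A}
      = Fintype.card (Matrix (Fin m ⊕ Fin m) (Fin m ⊕ Fin m) (ZMod 2))ˣ := by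
    rw [← Nat.card_eq_fintype_card]
    exact Nat.card_congr ⟨fun A => A.2.unit, fun u => ⟨u.1, u.isUnit⟩, fun A =>
      Subtype.ext A.2.unit_spec, fun u => Units.ext (by simp)⟩
  rw [ha, hb]
  exact final_arith m _ _ _ hm hB1 hB2 hc1 Fintype.card_pos
end
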